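/- Let H be a subgyrogroup of a gyrogroup G. Then H is normal in G (i.e., the operation (a ⊕ H) ⊕ (b ⊕ H) := (a ⊕ b) ⊕ H on left cosets is well defined) if for all x, y ∈ G, (x ⊕ H) ⊕ (y ⊕ H) = (x ⊕ y) ⊕ H as sets, and conversely. -/
import Mathlib


universe u v

class Gyrogroup (G : Type u) where
  add : G → G → G
  zero : G
  neg : G → G
  gyr : G → G → Equiv.Perm G
  zero_add : ∀ a : G, add zero a = a
  add_zero : ∀ a : G, add a zero = a
  neg_add : ∀ a : G, add (neg a) a = zero
  add_neg : ∀ a : G, add a (neg a) = zero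
  gyr_hom : ∀ x y a b : G, gyr x y (add a b) = add (gyr x y a) (gyr x y b)
  gyrassoc : ∀ x y z : G, add x (add y z) = add (add x y) (gyr x y z)
  loop : ∀ x y : G, gyr (add x y) y = gyr x y

open Gyrogroup

/-- A subgyrogroup: a subset containing 0, closed under ⊕, ⊖ and the gyroautomorphisms. -/
def IsSubgyrogroup {G : Type u} [Gyrogroup G] (H : Set G) : Prop :=
  (zero : G) ∈ H ∧ (∀ a ∈ H, ∀ b ∈ H, add a b ∈ H) ∧ (∀ a ∈ H, neg a ∈ H) ∧
    (∀ a ∈ H, ∀ b ∈ H, ∀ c ∈ H, gyr a b c ∈ H)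

/-- The left coset a ⊕ B = {a ⊕ b : b ∈ B}. -/
def gCoset {G : Type u} [Gyrogroup G] (a : G) (B : Set G) : Set G :=
  {c | ∃ b ∈ B, c = add a b}

/-- The setwise sum A ⊕ B = {a ⊕ b : a ∈ A, b ∈ B}. -/
def gSetAdd {G : Type u} [Gyrogroup G] (A B : Set G) : Set G :=
  {c | ∃ a ∈ A, ∃ b ∈ B, c = add a b}

section GyroLemmas

variable {G : Type u} [Gyrogroup G]

/-- Left cancellation: the map `b ↦ a ⊕ b` is injective. -/
lemma gadd_left_cancel (a : G) {b c : G} (h : add a b = add a c) : b = c := by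
  have e : ∀ w : G, add (neg a) (add a w) = gyr (neg a) a w := fun w => by
    rw [gyrassoc, Gyrogroup.neg_add, Gyrogroup.zero_add]
  have e2 : gyr (neg a) a b = gyr (neg a) a c := by
    rw [← e b, ← e c, h]
  exact (gyr (neg a) a).injective e2

lemma gyr_zero_left (a z : G) : gyr (zero : G) a z = z := by
  have h := gyrassoc (zero : G) a z
  rw [Gyrogroup.zero_add, Gyrogroup.zero_add] at h
  exact (gadd_left_cancel a h).symm

lemma gyr_neg_self (a z : G) : gyr (neg a) a z = z := by
  have h := loop (neg a) a
  rw [Gyrogroup.neg_add] at h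
  rw [← h, gyr_zero_left]

lemma gyr_self_neg (a z : G) : gyr a (neg a) z = z := by
  have h := loop a (neg a)
  rw [Gyrogroup.add_neg] at h
  rw [← h, gyr_zero_left]

lemma neg_add_cancel' (a b : G) : add (neg a) (add a b) = b := by
  rw [gyrassoc, Gyrogroup.neg_add, Gyrogroup.zero_add, gyr_neg_self]

lemma add_neg_cancel' (a b : G) : add a (add (neg a) b) = b := by
  rw [gyrassoc, Gyrogroup.add_neg, Gyrogroup.zero_add, gyr_self_neg]

/-- An explicit right inverse of the gyration `gyr x y`. -/
lemma gyr_inv (x y h : G) : gyr x y (gyr (neg x) (add x y) h) = h := by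
  apply gadd_left_cancel (add x y)
  have e1 : add y (gyr (neg x) (add x y) h) = add (neg x) (add (add x y) h) := by
    rw [gyrassoc (neg x) (add x y) h, neg_add_cancel']
  calc add (add x y) (gyr x y (gyr (neg x) (add x y) h))
      = add x (add y (gyr (neg x) (add x y) h)) := (gyrassoc x y _).symm
    _ = add x (add (neg x) (add (add x y) h)) := by rw [e1]
    _ = add (add x y) h := add_neg_cancel' _ _

lemma add_gyr_neg (x y : G) : add (add x y) (gyr x y (neg y)) = x := by
  rw [← gyrassoc, Gyrogroup.add_neg, Gyrogroup.add_zero]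

end GyroLemmas

/-- H is normal in G (the coset operation (a ⊕ H) ⊕ (b ⊕ H) := (a ⊕ b) ⊕ H is well
defined) if and only if (x ⊕ H) ⊕ (y ⊕ H) = (x ⊕ y) ⊕ H as sets, for all x, y. -/
theorem normal_iff_coset_setadd {G : Type u} [Gyrogroup G] (H : Set G)
    (hH : IsSubgyrogroup H) :
    (∀ a a' b b' : G, a' ∈ gCoset a H → b' ∈ gCoset b H →
      gCoset (add a' b') H = gCoset (add a b) H) ↔
    (∀ x y : G, gSetAdd (gCoset x H) (gCoset y H) = gCoset (add x y) H) := by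
  obtain ⟨h0H, haddH, hnegH, -⟩ := hH
  constructor
  · intro WD x y
    -- Step 1: all gyrations map H into H.
    have gyrH : ∀ u v : G, ∀ h ∈ H, gyr u v h ∈ H := by
      intro u v h hh
      have h1 : add v h ∈ gCoset v H := ⟨h, hh, rfl⟩
      have h2 : (u : G) ∈ gCoset u H := ⟨zero, h0H, (Gyrogroup.add_zero u).symm⟩
      have h3 := WD u u v (add v h) h2 h1
      have h4 : add u (add v h) ∈ gCoset (add u (add v h)) H :=
        ⟨zero, h0H, (Gyrogroup.add_zero _).symm⟩
      rw [h3] at h4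
      obtain ⟨h', hh', he⟩ := h4
      rw [gyrassoc] at he
      have hc := gadd_left_cancel (add u v) he
      rw [hc]; exact hh'
    ext c
    constructor
    · rintro ⟨a', ha', b', hb', rfl⟩
      have h3 := WD x a' y b' ha' hb'
      have hm : add a' b' ∈ gCoset (add a' b') H := ⟨zero, h0H, (Gyrogroup.add_zero _).symm⟩
      rw [h3] at hm
      exact hm
    · rintro ⟨h, hh, rfl⟩
      refine ⟨x, ⟨zero, h0H, (Gyrogroup.add_zero _).symm⟩,
        add y (gyr (neg x) (add x y) h),
        ⟨gyr (neg x) (add x y) h, gyrH _ _ h hh, rfl⟩, ?_⟩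
      rw [gyrassoc, gyr_inv]
  · intro S a a' b b' ha' hb'
    -- all gyrations map H into H
    have gyrH : ∀ u v : G, ∀ h ∈ H, gyr u v h ∈ H := by
      intro u v h hh
      have mem : add u (add v h) ∈ gSetAdd (gCoset u H) (gCoset v H) :=
        ⟨u, ⟨zero, h0H, (Gyrogroup.add_zero _).symm⟩, add v h, ⟨h, hh, rfl⟩, rfl⟩
      rw [S u v] at mem
      obtain ⟨h', hh', he⟩ := mem
      rw [gyrassoc] at he
      have hc := gadd_left_cancel (add u v) he
      rw [hc]; exact hh'
    have cosub : ∀ c : G, ∀ h₁ ∈ H, gCoset (add c h₁) H ⊆ gCoset c H := by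
      intro c h₁ hh₁ w hw
      obtain ⟨h', hh', rfl⟩ := hw
      refine ⟨add h₁ (gyr (neg c) (add c h₁) h'),
        haddH _ hh₁ _ (gyrH _ _ h' hh'), ?_⟩
      rw [gyrassoc c h₁ _, gyr_inv]
    have coeq : ∀ c c' : G, c' ∈ gCoset c H → gCoset c' H = gCoset c H := by
      intro c c' hc'
      obtain ⟨h₁, hh₁, rfl⟩ := hc'
      refine Set.Subset.antisymm (cosub c h₁ hh₁) ?_
      have hc : c ∈ gCoset (add c h₁) H :=
        ⟨gyr c h₁ (neg h₁), gyrH _ _ _ (hnegH _ hh₁), (add_gyr_neg c h₁).symm⟩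
      obtain ⟨h₂, hh₂, he⟩ := hc
      intro w hw
      obtain ⟨h', hh', rfl⟩ := hw
      exact cosub (add c h₁) h₂ hh₂ ⟨h', hh', by rw [← he]⟩
    calc gCoset (add a' b') H
        = gSetAdd (gCoset a' H) (gCoset b' H) := (S a' b').symm
      _ = gSetAdd (gCoset a H) (gCoset b H) := by
            rw [coeq a a' ha', coeq b b' hb']
      _ = gCoset (add a b) H := S a b
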